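/- Let L ⊆ E be a linear subspace and let 𝒞 = {(y, w) ∈ K* × C* : A* y − w ∈ L}. Suppose there exist ŷ ∈ relint K* and ŵ ∈ relint C* with A* ŷ − ŵ ∈ L. Then the orthogonal projection of X(b) onto L satisfies proj_L X(b) := {x ∈ L : there exists u ∈ L⊥ with x + u ∈ X(b)} = {x ∈ L : ⟨A* y − w, x⟩ ≤ ⟨b, y⟩ for all (y, w) ∈ 𝒞}. -/

import Mathlib

open RealInnerProductSpace Set Pointwise

variable {E E' : Type*}
  [NormedAddCommGroup E] [InnerProductSpace ℝ E] [FiniteDimensional ℝ E]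
  [NormedAddCommGroup E'] [InnerProductSpace ℝ E'] [FiniteDimensional ℝ E']

/-- A nonempty closed convex cone containing `0`. -/
structure IsClosedConvexCone {F : Type*} [NormedAddCommGroup F] [InnerProductSpace ℝ F]
    (K : Set F) : Prop where
  closed : IsClosed K
  convex : Convex ℝ K
  smul_mem : ∀ ⦃x⦄, x ∈ K → ∀ ⦃t : ℝ⦄, 0 ≤ t → t • x ∈ K
  zero_mem : (0 : F) ∈ K

/-- The dual cone `S* = {y : ⟨x,y⟩ ≥ 0 ∀ x ∈ S}`. -/
def dualCone {F : Type*} [NormedAddCommGroup F] [InnerProductSpace ℝ F] (S : Set F) : Set F :=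
  {y | ∀ x ∈ S, 0 ≤ ⟪x, y⟫}

/-- The polar cone `S° = {y : ⟨x,y⟩ ≤ 0 ∀ x ∈ S}`. -/
def polarCone {F : Type*} [NormedAddCommGroup F] [InnerProductSpace ℝ F] (S : Set F) : Set F :=
  {y | ∀ x ∈ S, ⟪x, y⟫ ≤ 0}

/-- Primal feasible set `X(b) = {x ∈ C : b - A x ∈ K}`. -/
def Xfeas (A : E →ₗ[ℝ] E') (K : Set E') (C : Set E) (b : E') : Set E :=
  {x | x ∈ C ∧ b - A x ∈ K}

/-- Dual feasible set `Y(c) = {y ∈ K* : A* y - c ∈ C*}`. -/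
def Yfeas (A : E →ₗ[ℝ] E') (K : Set E') (C : Set E) (c : E) : Set E' :=
  {y | y ∈ dualCone K ∧ LinearMap.adjoint A y - c ∈ dualCone C}

/-- Primal optimal value `P* = sup {⟨c,x⟩ : x ∈ X(b)}`. -/
noncomputable def Pval (A : E →ₗ[ℝ] E') (K : Set E') (C : Set E) (b : E') (c : E) : ℝ :=
  sSup ((fun x => ⟪c, x⟫) '' Xfeas A K C b)

/-- Dual optimal value `D* = inf {⟨b,y⟩ : y ∈ Y(c)}`. -/
noncomputable def Dval (A : E →ₗ[ℝ] E') (K : Set E') (C : Set E) (b : E') (c : E) : ℝ :=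
  sInf ((fun y => ⟪b, y⟫) '' Yfeas A K C c)

/-- Recession cone of the primal feasible region: `{x ∈ C : A x ∈ -K}`. -/
def recXSet (A : E →ₗ[ℝ] E') (K : Set E') (C : Set E) : Set E :=
  {x | x ∈ C ∧ A x ∈ -K}

/-- Recession cone of the dual feasible region: `{y ∈ K* : A* y ∈ C*}`. -/
def recYSet (A : E →ₗ[ℝ] E') (K : Set E') (C : Set E) : Set E' :=
  {y | y ∈ dualCone K ∧ LinearMap.adjoint A y ∈ dualCone C}

/-- `X(b)` is almost feasible. -/
def AlmostFeasX (A : E →ₗ[ℝ] E') (K : Set E') (C : Set E) (b : E') : Prop :=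
  ∀ ε : ℝ, 0 < ε → ∃ bε : E', ‖bε‖ ≤ ε ∧ (Xfeas A K C (b + bε)).Nonempty

/-- `Y(c)` is almost feasible. -/
def AlmostFeasY (A : E →ₗ[ℝ] E') (K : Set E') (C : Set E) (c : E) : Prop :=
  ∀ ε : ℝ, 0 < ε → ∃ cε : E, ‖cε‖ ≤ ε ∧ (Yfeas A K C (c + cε)).Nonempty


/-!
The inclusion `⊆` is weak duality. For `⊇`, let `f (z, k) = (A z + k, P_L z)`. For `x ∈ L`,
`x ∈ proj_L X(b)` iff `(b, x) ∈ f (C × K)`, while the dual cone of `f (C × K)` consists of the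
`(y, v)` with `y ∈ K*` and `A* y + P_L v ∈ C*`; so the right-hand side says exactly that `(b, x)`
lies in the double dual of `f (C × K)`, i.e. in its closure, and it remains to see that
`f (C × K)` is closed. If `f (z, k) = 0` then `z ∈ L⊥`, hence `⟪z, ŵ⟫ = ⟪A z, ŷ⟫ = -⟪k, ŷ⟫`; both
sides having a sign, `⟪z, ŵ⟫ = ⟪k, ŷ⟫ = 0`, and as `ŵ`, `ŷ` are relative interior points of the
dual cones this forces `-z ∈ C`, `-k ∈ K`. So `C × K` meets `ker f` only in its lineality space.
Cutting the cone by a complement of that intersection, `f` vanishes on it only at `0`, hence is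
bounded below on its unit sphere by compactness, and the image is closed.
-/

open Topology

namespace PointedCone

variable {X Y : Type*} [NormedAddCommGroup X] [NormedSpace ℝ X] [FiniteDimensional ℝ X]
  [NormedAddCommGroup Y] [NormedSpace ℝ Y] {Q : PointedCone ℝ X}

lemma exists_pos_mul_norm_le_norm_map (hQ : IsClosed (Q : Set X)) (f : X →ₗ[ℝ] Y)
    (hker : ∀ q ∈ Q, f q = 0 → q = 0) : ∃ c > 0, ∀ q ∈ Q, c * ‖q‖ ≤ ‖f q‖ := by
  have hS : IsCompact ((Q : Set X) ∩ Metric.sphere 0 1) := (isCompact_sphere 0 1).inter_left hQ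
  obtain ⟨c, hc, hcS⟩ := hS.exists_forall_le' (f := fun q => ‖f q‖) (a := 0)
    f.continuous_of_finiteDimensional.norm.continuousOn
    fun q ⟨hq, hq1⟩ => norm_pos_iff.2 fun h => by simp [hker q hq h] at hq1
  refine ⟨c, hc, fun q hq => ?_⟩
  rcases eq_or_ne q 0 with rfl | hq0
  · simp
  have hn : 0 < ‖q‖ := norm_pos_iff.2 hq0
  have := hcS (‖q‖⁻¹ • q) ⟨Q.smul_mem (inv_nonneg.2 hn.le) hq, by simp [norm_smul, hn.ne']⟩
  rw [map_smul, norm_smul, norm_inv, norm_norm, le_inv_mul_iff₀ hn] at this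
  linarith

lemma isClosed_image_of_map_eq_zero (hQ : IsClosed (Q : Set X)) (f : X →ₗ[ℝ] Y)
    (hker : ∀ q ∈ Q, f q = 0 → q = 0) : IsClosed (f '' Q) := by
  obtain ⟨c, hc, hcQ⟩ := exists_pos_mul_norm_le_norm_map hQ f hker
  refine isClosed_of_closure_subset fun p hp => ?_
  set B := (Q : Set X) ∩ Metric.closedBall 0 ((‖p‖ + 1) / c)
  have hB : IsClosed (f '' B) :=
    (((isCompact_closedBall _ _).inter_left hQ).image f.continuous_of_finiteDimensional).isClosed
  suffices p ∈ closure (f '' B) from image_mono inter_subset_left (hB.closure_subset this)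
  rw [Metric.mem_closure_iff] at hp ⊢
  intro ε hε
  obtain ⟨_, ⟨q, hq, rfl⟩, hpq⟩ := hp (min ε 1) (by positivity)
  refine ⟨f q, ⟨q, ⟨hq, ?_⟩, rfl⟩, hpq.trans_le (min_le_left _ _)⟩
  have hfq : ‖f q‖ ≤ ‖p‖ + 1 := by
    have := norm_le_norm_add_norm_sub' (f q) p
    rw [← dist_eq_norm] at this
    linarith [dist_comm p (f q), hpq.trans_le (min_le_right ε 1)]
  rw [mem_closedBall_zero_iff, le_div_iff₀ hc]
  linarith [hcQ q hq]

lemma isClosed_image_of_map_eq_zero_mem_lineal (hQ : IsClosed (Q : Set X)) (f : X →ₗ[ℝ] Y)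
    (hker : ∀ q ∈ Q, f q = 0 → q ∈ Q.lineal) : IsClosed (f '' Q) := by
  obtain ⟨W, hW⟩ := (Q.lineal ⊓ LinearMap.ker f).exists_isCompl
  have himage : f '' Q = f '' (Q ⊓ W : PointedCone ℝ X) := by
    refine (image_mono inter_subset_left).antisymm' ?_
    rintro _ ⟨q, hq, rfl⟩
    obtain ⟨w, w', hw, hw', rfl⟩ := Submodule.codisjoint_iff_exists_add_eq.1 hW.codisjoint q
    refine ⟨w', ⟨?_, hw'⟩, by simp [LinearMap.mem_ker.1 hw.2]⟩
    simpa using Q.add_mem hq (mem_lineal.1 hw.1).2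
  rw [himage]
  refine isClosed_image_of_map_eq_zero (hQ.inter (Submodule.closed_of_finiteDimensional W)) f ?_
  rintro q ⟨hq, hqW⟩ hfq
  exact Submodule.disjoint_def.1 hW.disjoint q ⟨hker q hq hfq, hfq⟩ hqW

end PointedCone

lemma PointedCone.mem_image_of_forall_inner_nonneg {X Y : Type*} [AddCommGroup X] [Module ℝ X]
    [NormedAddCommGroup Y] [InnerProductSpace ℝ Y] [CompleteSpace Y]
    (Q : PointedCone ℝ X) (f : X →ₗ[ℝ] Y) (hQ : IsClosed (f '' Q)) {p : Y}
    (hp : ∀ y, (∀ q ∈ Q, 0 ≤ ⟪f q, y⟫) → 0 ≤ ⟪p, y⟫) : p ∈ f '' Q := by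
  by_contra hpQ
  obtain ⟨y, hy, hpy⟩ :=
    ProperCone.hyperplane_separation' (C := ⟨Q.map f, by rw [← Q.coe_map f] at hQ; exact hQ⟩) hpQ
  exact hpy.not_ge (hp y fun q hq => hy _ ⟨q, hq, rfl⟩)

lemma exists_add_smul_sub_mem_of_mem_intrinsicInterior {F : Type*} [NormedAddCommGroup F]
    [NormedSpace ℝ F] {S : Set F} {a w : F} (ha : a ∈ intrinsicInterior ℝ S) (hw : w ∈ S) :
    ∃ ε : ℝ, 0 < ε ∧ a + ε • (a - w) ∈ S := by
  obtain ⟨a, ha, rfl⟩ := ha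
  have hmem (t : ℝ) : (a : F) + t • ((a : F) - w) ∈ affineSpan ℝ S := by
    simpa [vsub_eq_sub, vadd_eq_add, add_comm] using
      AffineSubspace.smul_vsub_vadd_mem _ t a.2 (subset_affineSpan ℝ S hw) a.2
  let c : ℝ → affineSpan ℝ S := fun t => ⟨_, hmem t⟩
  have hc : Continuous c := by fun_prop
  have : ∀ᶠ t in 𝓝[>] (0 : ℝ), c t ∈ interior ((↑) ⁻¹' S) :=
    nhdsWithin_le_nhds <| hc.continuousAt.preimage_mem_nhds <|
      isOpen_interior.mem_nhds (by simpa [c] using ha)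
  obtain ⟨ε, hε, hεS⟩ := (this.and self_mem_nhdsWithin).exists
  exact ⟨ε, hεS, (interior_subset hε : c ε ∈ (↑) ⁻¹' S)⟩

section Cones

variable {F : Type*} [NormedAddCommGroup F] [InnerProductSpace ℝ F] {S : Set F}

lemma IsClosedConvexCone.add_mem (hS : IsClosedConvexCone S) {x y : F} (hx : x ∈ S)
    (hy : y ∈ S) : x + y ∈ S := by
  have := hS.smul_mem (hS.convex hx hy (by norm_num : (0 : ℝ) ≤ 1 / 2)
    (by norm_num : (0 : ℝ) ≤ 1 / 2) (by norm_num)) zero_le_two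
  rwa [← smul_add, smul_smul, show (2 : ℝ) * (1 / 2) = 1 by norm_num, one_smul] at this

def IsClosedConvexCone.toProperCone (hS : IsClosedConvexCone S) : ProperCone ℝ F where
  carrier := S
  add_mem' := hS.add_mem
  zero_mem' := hS.zero_mem
  smul_mem' c _ hx := hS.smul_mem hx c.2
  isClosed' := hS.closed

lemma IsClosedConvexCone.dualCone_dualCone [CompleteSpace F] (hS : IsClosedConvexCone S) :
    dualCone (dualCone S) = S :=
  congrArg SetLike.coe (ProperCone.innerDual_innerDual hS.toProperCone)

lemma IsClosedConvexCone.neg_mem_of_inner_eq_zero [CompleteSpace F] (hS : IsClosedConvexCone S)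
    {a z : F} (ha : a ∈ intrinsicInterior ℝ (dualCone S)) (hz : z ∈ S) (hza : ⟪z, a⟫ = 0) :
    -z ∈ S := by
  rw [← hS.dualCone_dualCone]
  intro w hw
  obtain ⟨ε, hε, hmem⟩ := exists_add_smul_sub_mem_of_mem_intrinsicInterior ha hw
  have := hmem z hz
  rw [inner_add_right, inner_smul_right, inner_sub_right, hza] at this
  rw [inner_neg_right, real_inner_comm]
  nlinarith

end Cones

lemma inner_adjoint_sub_le_of_mem_Xfeas {A : E →ₗ[ℝ] E'} {K : Set E'} {C : Set E} {b : E'} {x : E}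
    {y : E'} {w : E} (hx : x ∈ Xfeas A K C b) (hy : y ∈ dualCone K) (hw : w ∈ dualCone C) :
    ⟪LinearMap.adjoint A y - w, x⟫ ≤ ⟪b, y⟫ := by
  have hbx := hy _ hx.2
  have hwx := hw _ hx.1
  rw [inner_sub_left] at hbx
  rw [inner_sub_left, LinearMap.adjoint_inner_left]
  linarith [real_inner_comm x w, real_inner_comm (A x) y]

section ProjectionMap

variable {V W : Type*} [NormedAddCommGroup V] [InnerProductSpace ℝ V]
  [NormedAddCommGroup W] [InnerProductSpace ℝ W]

/-- `(z, k) ↦ (A z + k, P_L z)`. For `x ∈ L`, `(b, x)` lies in the image of `C × K` exactly when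
`x ∈ proj_L X(b)`, so this map presents the projection as a linear image of a cone. -/
noncomputable def projFeasMap (A : V →ₗ[ℝ] W) (L : Submodule ℝ V) [L.HasOrthogonalProjection] :
    V × W →ₗ[ℝ] WithLp 2 (W × V) :=
  (WithLp.linearEquiv 2 ℝ (W × V)).symm.toLinearMap ∘ₗ
    ((A ∘ₗ LinearMap.fst ℝ V W + LinearMap.snd ℝ V W).prod
      (L.starProjection.toLinearMap ∘ₗ LinearMap.fst ℝ V W))

lemma projFeasMap_apply (A : V →ₗ[ℝ] W) (L : Submodule ℝ V) [L.HasOrthogonalProjection]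
    (q : V × W) :
    projFeasMap A L q = WithLp.toLp 2 (A q.1 + q.2, L.starProjection q.1) := rfl

lemma exists_add_mem_Xfeas_of_projFeasMap_eq {A : V →ₗ[ℝ] W} {K : Set W} {C : Set V}
    {L : Submodule ℝ V} [L.HasOrthogonalProjection] {b : W} {x z : V} {k : W}
    (hz : z ∈ C) (hk : k ∈ K)
    (h : projFeasMap A L (z, k) = WithLp.toLp 2 (b, x)) : ∃ u ∈ Lᗮ, x + u ∈ Xfeas A K C b := by
  simp only [projFeasMap_apply, WithLp.toLp.injEq, Prod.mk.injEq] at h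
  obtain ⟨rfl, rfl⟩ := h
  refine ⟨z - L.starProjection z, L.sub_starProjection_mem_orthogonal z, ?_⟩
  rw [add_sub_cancel]
  exact ⟨hz, by rwa [add_sub_cancel_left]⟩

end ProjectionMap

lemma inner_projFeasMap (A : E →ₗ[ℝ] E') (L : Submodule ℝ E) (q : E × E')
    (Y : WithLp 2 (E' × E)) :
    ⟪projFeasMap A L q, Y⟫ =
      ⟪q.1, LinearMap.adjoint A Y.fst + L.starProjection Y.snd⟫ + ⟪q.2, Y.fst⟫ := by
  simp only [projFeasMap_apply, WithLp.prod_inner_apply, inner_add_left, inner_add_right,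
    LinearMap.adjoint_inner_right, Submodule.inner_starProjection_left_eq_right, WithLp.fst,
    WithLp.snd]
  ring

lemma neg_mem_of_projFeasMap_eq_zero {A : E →ₗ[ℝ] E'} {K : Set E'} {C : Set E}
    (hK : IsClosedConvexCone K) (hC : IsClosedConvexCone C) {L : Submodule ℝ E} {ŷ : E'} {ŵ : E}
    (hŷ : ŷ ∈ intrinsicInterior ℝ (dualCone K)) (hŵ : ŵ ∈ intrinsicInterior ℝ (dualCone C))
    (hL : LinearMap.adjoint A ŷ - ŵ ∈ L) {z : E} {k : E'} (hz : z ∈ C) (hk : k ∈ K)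
    (h : projFeasMap A L (z, k) = 0) : -z ∈ C ∧ -k ∈ K := by
  simp only [projFeasMap_apply, WithLp.toLp_eq_zero, Prod.mk_eq_zero,
    Submodule.starProjection_apply_eq_zero_iff] at h
  obtain ⟨hAzk, hzL⟩ := h
  have hsum : ⟪k, ŷ⟫ + ⟪z, ŵ⟫ = 0 := by
    have := Submodule.inner_right_of_mem_orthogonal hL hzL
    rw [inner_sub_left, LinearMap.adjoint_inner_left, eq_neg_of_add_eq_zero_left hAzk,
      inner_neg_right] at this
    linarith [real_inner_comm ŷ k, real_inner_comm z ŵ]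
  have hkŷ := intrinsicInterior_subset hŷ k hk
  have hzŵ := intrinsicInterior_subset hŵ z hz
  exact ⟨hC.neg_mem_of_inner_eq_zero hŵ hz (by linarith),
    hK.neg_mem_of_inner_eq_zero hŷ hk (by linarith)⟩

lemma inner_toLp_nonneg_of_forall_inner_le {A : E →ₗ[ℝ] E'} {K : Set E'} {C : Set E}
    (hK : IsClosedConvexCone K) (hC : IsClosedConvexCone C) {L : Submodule ℝ E} {b : E'} {x : E}
    (hxL : x ∈ L) (hx : ∀ y ∈ dualCone K, ∀ w ∈ dualCone C,
      LinearMap.adjoint A y - w ∈ L → ⟪LinearMap.adjoint A y - w, x⟫ ≤ ⟪b, y⟫)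
    {Y : WithLp 2 (E' × E)} (hY : ∀ z ∈ C, ∀ k ∈ K, 0 ≤ ⟪projFeasMap A L (z, k), Y⟫) :
    0 ≤ ⟪WithLp.toLp 2 (b, x), Y⟫ := by
  have hyK : Y.fst ∈ dualCone K := fun k hk => by
    simpa only [inner_projFeasMap, inner_zero_left, zero_add] using hY 0 hC.zero_mem k hk
  have hwC : LinearMap.adjoint A Y.fst + L.starProjection Y.snd ∈ dualCone C := fun z hz => by
    simpa only [inner_projFeasMap, inner_zero_left, add_zero] using hY z hz 0 hK.zero_mem
  have := hx _ hyK _ hwC (by simp)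
  rw [sub_add_cancel_left, inner_neg_left, Submodule.inner_starProjection_left_eq_right,
    L.starProjection_eq_self_iff.2 hxL] at this
  change 0 ≤ ⟪b, Y.fst⟫ + ⟪x, Y.snd⟫
  linarith [real_inner_comm x Y.snd, real_inner_comm b Y.fst]

theorem stmt19 (A : E →ₗ[ℝ] E') (K : Set E') (C : Set E)
    (hK : IsClosedConvexCone K) (hC : IsClosedConvexCone C) (b : E')
    (L : Submodule ℝ E)
    (hhat : ∃ y ∈ intrinsicInterior ℝ (dualCone K),
      ∃ w ∈ intrinsicInterior ℝ (dualCone C), LinearMap.adjoint A y - w ∈ L) :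
    {x : E | x ∈ L ∧ ∃ u ∈ Lᗮ, x + u ∈ Xfeas A K C b} =
      {x : E | x ∈ L ∧ ∀ y ∈ dualCone K, ∀ w ∈ dualCone C,
        LinearMap.adjoint A y - w ∈ L →
          ⟪LinearMap.adjoint A y - w, x⟫ ≤ ⟪b, y⟫} := by
  obtain ⟨ŷ, hŷ, ŵ, hŵ, hL⟩ := hhat
  ext x
  refine ⟨fun ⟨hxL, u, hu, hxu⟩ => ⟨hxL, fun y hy w hw hyw => ?_⟩, fun ⟨hxL, hx⟩ => ⟨hxL, ?_⟩⟩
  · have := inner_adjoint_sub_le_of_mem_Xfeas hxu hy hw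
    rwa [inner_add_right, Submodule.inner_right_of_mem_orthogonal hyw hu, add_zero] at this
  let Q : PointedCone ℝ (E × E') := (hC.toProperCone : PointedCone ℝ E).prod hK.toProperCone
  have hcl : IsClosed (projFeasMap A L '' Q) :=
    Q.isClosed_image_of_map_eq_zero_mem_lineal (hC.closed.prod hK.closed) _
      fun _ ⟨hz, hk⟩ h0 => ⟨⟨hz, hk⟩, neg_mem_of_projFeasMap_eq_zero hK hC hŷ hŵ hL hz hk h0⟩
  obtain ⟨⟨z, k⟩, ⟨hz, hk⟩, hzk⟩ := Q.mem_image_of_forall_inner_nonneg _ hcl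
    fun Y hY => inner_toLp_nonneg_of_forall_inner_le hK hC hxL hx
      fun z hz k hk => hY (z, k) ⟨hz, hk⟩
  exact exists_add_mem_Xfeas_of_projFeasMap_eq hz hk hzk
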